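/- An element Y of H = H(U⊗conj(U)) is isotropic for the Lorentzian metric g (i.e. g(Y,Y)=0) if and only if Y = ±u⊗conj(u) for some u ∈ U. -/

import Mathlib

open Matrix

noncomputable section

abbrev U2 := Fin 2 → ℂ
abbrev M2 := Matrix (Fin 2) (Fin 2) ℂ

def epsBil (c : ℂ) (u v : U2) : ℂ := c * (u 0 * v 1 - u 1 * v 0)

def outerH (u : U2) : M2 := fun A B => u A * star (u B)

def IsHerm (M : M2) : Prop := Mᴴ = M

/-!
The Hermitian matrices are the real span of the rank-one tensors `u ⊗ ū`, so real bilinearity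
forces `g` to agree there with `c c̄` times the polar form of the determinant; hence
`g(Y, Y) = 2 |c|² det Y`. A Hermitian `2 × 2` matrix of determinant zero is a real multiple
`t • w wᴴ`, and replacing `w` by `√|t| • w` leaves only the sign of `t`.
-/

theorem LinearMap.eqOn_span₂ {R M N P : Type*} [CommSemiring R] [AddCommMonoid M] [Module R M]
    [AddCommMonoid N] [Module R N] [AddCommMonoid P] [Module R P]
    {f f' : M →ₗ[R] N →ₗ[R] P} {s : Set M} {t : Set N}
    (h : ∀ x ∈ s, ∀ y ∈ t, f x y = f' x y) {x : M} (hx : x ∈ Submodule.span R s)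
    {y : N} (hy : y ∈ Submodule.span R t) : f x y = f' x y := by
  have hxt : Set.EqOn (f x) (f' x) t := fun y hy =>
    LinearMap.eqOn_span (f := f.flip y) (g := f'.flip y) (fun x hx => h x hx y hy) hx
  exact LinearMap.eqOn_span hxt hy

theorem IsHerm.star_apply {Y : M2} (hY : IsHerm Y) (i j : Fin 2) : star (Y j i) = Y i j :=
  congrFun (congrFun hY i) j

theorem IsHerm.im_apply_self {Y : M2} (hY : IsHerm Y) (i : Fin 2) : (Y i i).im = 0 :=
  Complex.conj_eq_iff_im.mp (hY.star_apply i i)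

theorem IsHerm.apply_self {Y : M2} (hY : IsHerm Y) (i : Fin 2) : Y i i = ((Y i i).re : ℂ) :=
  (Complex.conj_eq_iff_re.mp (hY.star_apply i i)).symm

theorem mem_span_outerH_of_isHerm {Y : M2} (hY : IsHerm Y) :
    Y ∈ Submodule.span ℝ (Set.range outerH) := by
  set b := Y 0 1
  have hY10 : Y 1 0 = star b := (hY.star_apply 1 0).symm
  have hdecomp : Y = ((Y 0 0).re - b.re - b.im) • outerH ![1, 0]
      + ((Y 1 1).re - b.re - b.im) • outerH ![0, 1]
      + b.re • outerH ![1, 1] + b.im • outerH ![1, -Complex.I] := by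
    ext i j
    fin_cases i <;> fin_cases j <;> apply Complex.ext <;>
      simp [outerH, b, hY10, hY.im_apply_self] <;> ring
  rw [hdecomp]
  refine add_mem (add_mem (add_mem ?_ ?_) ?_) ?_ <;>
    exact Submodule.smul_mem _ _ (Submodule.subset_span ⟨_, rfl⟩)

def lorentzForm (c : ℂ) : M2 →ₗ[ℝ] M2 →ₗ[ℝ] ℂ :=
  LinearMap.mk₂ ℝ
    (fun M N => c * star c * (M 0 0 * N 1 1 + M 1 1 * N 0 0 - M 0 1 * N 1 0 - M 1 0 * N 0 1))
    (by intros; simp only [Matrix.add_apply]; ring)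
    (by intros; simp only [Matrix.smul_apply, Complex.real_smul]; ring)
    (by intros; simp only [Matrix.add_apply]; ring)
    (by intros; simp only [Matrix.smul_apply, Complex.real_smul]; ring)

theorem lorentzForm_outerH (c : ℂ) (u v : U2) :
    lorentzForm c (outerH u) (outerH v) = epsBil c u v * star (epsBil c u v) := by
  simp only [lorentzForm, LinearMap.mk₂_apply, outerH, epsBil, star_mul', star_sub]
  ring

theorem lorentzForm_self (c : ℂ) (M : M2) : lorentzForm c M M = c * star c * (2 * M.det) := by
  rw [det_fin_two]
  simp only [lorentzForm, LinearMap.mk₂_apply]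
  ring

theorem eq_lorentzForm_of_eq_on_outerH {c : ℂ} {G : M2 →ₗ[ℝ] M2 →ₗ[ℝ] ℂ}
    (hG : ∀ u v : U2, G (outerH u) (outerH v) = epsBil c u v * star (epsBil c u v))
    {M N : M2} (hM : IsHerm M) (hN : IsHerm N) : G M N = lorentzForm c M N := by
  refine LinearMap.eqOn_span₂ ?_ (mem_span_outerH_of_isHerm hM) (mem_span_outerH_of_isHerm hN)
  rintro _ ⟨u, rfl⟩ _ ⟨v, rfl⟩
  rw [hG, lorentzForm_outerH]

theorem det_outerH (u : U2) : (outerH u).det = 0 := by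
  simp only [det_fin_two, outerH]
  ring

theorem exists_outerH_eq_real_smul (t : ℝ) (w : U2) :
    ∃ u, t • outerH w = outerH u ∨ t • outerH w = -outerH u := by
  refine ⟨(√|t| : ℂ) • w, ?_⟩
  have hsq : outerH ((√|t| : ℂ) • w) = |t| • outerH w := by
    ext i j
    simp only [outerH, Pi.smul_apply, smul_eq_mul, star_mul', Complex.star_def,
      Complex.conj_ofReal, Matrix.smul_apply, Complex.real_smul]
    rw [mul_mul_mul_comm, ← Complex.ofReal_mul, Real.mul_self_sqrt (abs_nonneg t)]
  rw [hsq]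
  rcases abs_choice t with h | h <;> rw [h]
  · exact Or.inl rfl
  · exact Or.inr (by rw [neg_smul, neg_neg])

theorem exists_real_smul_outerH_of_det_eq_zero {Y : M2} (hY : IsHerm Y) (hdet : Y.det = 0) :
    ∃ (t : ℝ) (w : U2), Y = t • outerH w := by
  obtain ⟨a, hY00⟩ : ∃ a : ℝ, Y 0 0 = a := ⟨_, hY.apply_self 0⟩
  obtain ⟨d, hY11⟩ : ∃ d : ℝ, Y 1 1 = d := ⟨_, hY.apply_self 1⟩
  have hY10 : Y 1 0 = star (Y 0 1) := (hY.star_apply 1 0).symm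
  rw [det_fin_two, hY10, hY00, hY11] at hdet
  by_cases ha : a = 0
  · have hb : Y 0 1 = 0 := by
      rw [ha, Complex.ofReal_zero, zero_mul, zero_sub, neg_eq_zero] at hdet
      exact (CStarRing.mul_star_self_eq_zero_iff _).mp hdet
    refine ⟨d, ![0, 1], ?_⟩
    ext i j
    fin_cases i <;> fin_cases j <;> simp [outerH, hY00, hY11, ha, hY10, hb]
  · -- `Y` has rank one, with first column `(a, conj (Y 0 1))`
    refine ⟨a⁻¹, ![a, star (Y 0 1)], ?_⟩
    have ha' : (a : ℂ) ≠ 0 := Complex.ofReal_ne_zero.mpr ha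
    ext i j
    fin_cases i <;> fin_cases j <;> simp [outerH, hY00, hY11, hY10, Complex.conj_ofReal] <;>
      field_simp
    rw [Complex.star_def] at hdet
    linear_combination hdet

theorem isHerm_det_eq_zero_iff {Y : M2} (hY : IsHerm Y) :
    Y.det = 0 ↔ ∃ u : U2, Y = outerH u ∨ Y = -outerH u := by
  constructor
  · intro hdet
    obtain ⟨t, w, rfl⟩ := exists_real_smul_outerH_of_det_eq_zero hY hdet
    exact exists_outerH_eq_real_smul t w
  · rintro ⟨u, rfl | rfl⟩
    · exact det_outerH u
    · rw [det_neg, det_outerH, mul_zero]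

theorem isotropic_iff_decomposable (c : ℂ) (hc : c ≠ 0) (g : M2 → M2 → ℂ)
    (hg1 : ∀ M N P : M2, g (M + N) P = g M P + g N P)
    (hg2 : ∀ M N P : M2, g M (N + P) = g M N + g M P)
    (hg3 : ∀ (t : ℝ) (M N : M2), g (t • M) N = t • g M N)
    (hg4 : ∀ (t : ℝ) (M N : M2), g M (t • N) = t • g M N)
    (hg : ∀ u v : U2, g (outerH u) (outerH v)
        = epsBil c u v * star (epsBil c u v)) :
    ∀ Y : M2, IsHerm Y →
      (g Y Y = 0 ↔ ∃ u : U2, Y = outerH u ∨ Y = -outerH u) := by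
  intro Y hY
  have hgY : g Y Y = c * star c * (2 * Y.det) := by
    rw [← lorentzForm_self]
    exact eq_lorentzForm_of_eq_on_outerH (G := LinearMap.mk₂ ℝ g hg1 hg3 hg2 hg4) hg hY hY
  have hcc : c * star c ≠ 0 := mul_ne_zero hc (star_ne_zero.mpr hc)
  rw [hgY, mul_eq_zero, or_iff_right hcc, mul_eq_zero, or_iff_right two_ne_zero]
  exact isHerm_det_eq_zero_iff hY
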